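/- arXiv:2503.14882 — 3 statements merged into one kernel-verified Lean document; each statement's English description precedes it below -/
import Mathlib

section
/- (Convex hull of projection matrices) For m ≥ d ≥ 1, let Ω₁ = {Y : Y = X Xᴴ for some m×d complex matrix X with XᴴX = I_d} and Ω₂ = {Y Hermitian m×m : tr(Y) = d, 0 ⪯ Y ⪯ I}. Then Ω₁ ⊆ Ω₂, Ω₂ is convex, and every element of Ω₁ is an extreme point of Ω₂. -/
/-!
In the Loewner order `{Y | 0 ⪯ Y ⪯ 1}` is the order interval `[0, 1]`, hence convex. For the
operator norm the matrices form a C⋆-algebra, in which `[0, 1]` is the nonnegative part of the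
closed unit ball, whose extreme points are exactly the star projections. A matrix `X Xᴴ` with
`Xᴴ X = 1` is a star projection of trace `d`; it lies in `Ω₂ ⊆ [0, 1]`, and being extreme in
`[0, 1]` it is extreme in `Ω₂`.
-/

open Matrix Set
open scoped ComplexOrder

theorem isStarProjection_iff_mem_extremePoints_Icc {A : Type*} [CStarAlgebra A] [PartialOrder A]
    [StarOrderedRing A] {p : A} :
    IsStarProjection p ↔ p ∈ extremePoints ℝ (Icc 0 1) := by
  have hIcc : Icc (0 : A) 1 = {x | 0 ≤ x} ∩ Metric.closedBall 0 1 := by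
    ext x
    simp only [mem_Icc, mem_inter_iff, mem_ofPred_eq, mem_closedBall_zero_iff]
    exact and_congr_right fun hx ↦ (CStarAlgebra.norm_le_one_iff_of_nonneg x hx).symm
  rw [hIcc]
  exact isStarProjection_iff_mem_extremePoints_setOfPred_nonneg_inter_unitClosedBall

namespace Matrix

theorem isStarProjection_mul_conjTranspose {m n R : Type*} [Fintype m] [Fintype n]
    [DecidableEq n] [Semiring R] [StarRing R] {X : Matrix m n R} (hX : Xᴴ * X = 1) :
    IsStarProjection (X * Xᴴ) where
  isIdempotentElem := by
    rw [IsIdempotentElem, Matrix.mul_assoc, ← Matrix.mul_assoc Xᴴ, hX, Matrix.one_mul]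
  isSelfAdjoint := isHermitian_mul_conjTranspose_self X

variable {n 𝕜 : Type*} [RCLike 𝕜]

open scoped MatrixOrder

theorem _root_.IsStarProjection.posSemidef [Fintype n] {P : Matrix n n 𝕜}
    (hP : IsStarProjection P) : P.PosSemidef :=
  hP.nonneg.posSemidef

theorem setOf_posSemidef_and_posSemidef_one_sub_eq_Icc [DecidableEq n] :
    {Y : Matrix n n 𝕜 | Y.PosSemidef ∧ (1 - Y).PosSemidef} = Icc 0 1 := by
  ext Y
  simp only [mem_ofPred_eq, mem_Icc, le_iff, sub_zero]

theorem convex_setOf_posSemidef_and_posSemidef_one_sub [Fintype n] [DecidableEq n] :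
    Convex ℝ {Y : Matrix n n 𝕜 | Y.PosSemidef ∧ (1 - Y).PosSemidef} := by
  rw [setOf_posSemidef_and_posSemidef_one_sub_eq_Icc]
  exact convex_Icc 0 1

open scoped Matrix.Norms.L2Operator in
theorem _root_.IsStarProjection.mem_extremePoints_setOf_posSemidef_and_posSemidef_one_sub
    [Fintype n] [DecidableEq n] {P : Matrix n n ℂ} (hP : IsStarProjection P) :
    P ∈ extremePoints ℝ {Y : Matrix n n ℂ | Y.PosSemidef ∧ (1 - Y).PosSemidef} := by
  rw [setOf_posSemidef_and_posSemidef_one_sub_eq_Icc]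
  exact isStarProjection_iff_mem_extremePoints_Icc.mp hP

end Matrix

theorem projection_convex_hull_general (m d : ℕ)
    (Ω₁ Ω₂ : Set (Matrix (Fin m) (Fin m) ℂ))
    (hΩ₁ : Ω₁ = {Y | ∃ X : Matrix (Fin m) (Fin d) ℂ, Xᴴ * X = 1 ∧ Y = X * Xᴴ})
    (hΩ₂ : Ω₂ = {Y | Y.IsHermitian ∧ Y.trace = (d : ℂ) ∧ Y.PosSemidef ∧ (1 - Y).PosSemidef}) :
    Ω₁ ⊆ Ω₂ ∧ Convex ℝ Ω₂ ∧ ∀ Y ∈ Ω₁, Y ∈ Set.extremePoints ℝ Ω₂ := by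
  have hΩ₂_eq : Ω₂ = {Y | Y.trace = (d : ℂ)} ∩ {Y | Y.PosSemidef ∧ (1 - Y).PosSemidef} := by
    rw [hΩ₂]
    ext Y
    exact ⟨fun ⟨_, hY⟩ ↦ hY, fun hY ↦ ⟨hY.2.1.isHermitian, hY⟩⟩
  have hproj : ∀ Y ∈ Ω₁, IsStarProjection Y := by
    rw [hΩ₁]
    rintro _ ⟨X, hX, rfl⟩
    exact isStarProjection_mul_conjTranspose hX
  have htrace : ∀ Y ∈ Ω₁, Y.trace = (d : ℂ) := by
    rw [hΩ₁]
    rintro _ ⟨X, hX, rfl⟩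
    rw [trace_mul_comm, hX, trace_one, Fintype.card_fin]
  have hsub : Ω₁ ⊆ Ω₂ := fun Y hY ↦
    hΩ₂_eq ▸ ⟨htrace Y hY, (hproj Y hY).posSemidef, (hproj Y hY).one_sub.posSemidef⟩
  refine ⟨hsub, ?_, fun Y hY ↦ ?_⟩
  · rw [hΩ₂_eq]
    exact ((convex_singleton _).linear_preimage (traceLinearMap (Fin m) ℝ ℂ)).inter
      convex_setOf_posSemidef_and_posSemidef_one_sub
  · exact inter_extremePoints_subset_extremePoints_of_subset (hΩ₂_eq ▸ inter_subset_right)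
      ⟨hsub hY, (hproj Y hY).mem_extremePoints_setOf_posSemidef_and_posSemidef_one_sub⟩

/-- Convex hull relaxation (Overton–Womersley): with
`Ω₁ = {X Xᴴ : Xᴴ X = I_d}` and `Ω₂ = {Y Hermitian : tr Y = d, 0 ⪯ Y ⪯ I}`,
one has `Ω₁ ⊆ Ω₂`, `Ω₂` is convex, and every element of `Ω₁` is an extreme point of `Ω₂`. -/
theorem projection_convex_hull (m d : ℕ) (hd : 1 ≤ d) (hmd : d ≤ m)
    (Ω₁ Ω₂ : Set (Matrix (Fin m) (Fin m) ℂ))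
    (hΩ₁ : Ω₁ = {Y | ∃ X : Matrix (Fin m) (Fin d) ℂ, Xᴴ * X = 1 ∧ Y = X * Xᴴ})
    (hΩ₂ : Ω₂ = {Y | Y.IsHermitian ∧ Y.trace = (d : ℂ) ∧ Y.PosSemidef ∧ (1 - Y).PosSemidef}) :
    Ω₁ ⊆ Ω₂ ∧ Convex ℝ Ω₂ ∧ ∀ Y ∈ Ω₁, Y ∈ Set.extremePoints ℝ Ω₂ :=
  projection_convex_hull_general m d Ω₁ Ω₂ hΩ₁ hΩ₂
end

section
/- Let ẑ = Aᴴ Σ_{n=1}^N H_n B_n z_n + Aᴴ n, where the z_n ∈ ℂ^L are zero-mean random vectors with E[z_n z_nᴴ] = I_L, mutually uncorrelated, and n is a zero-mean noise vector with covariance σ²I independent of the z_n. Then E[(ẑ − Σ_n z_n)ᴴ(ẑ − Σ_n z_n)] = Σ_{n=1}^N tr((AᴴH_nB_n − I)(AᴴH_nB_n − I)ᴴ) + σ² tr(AᴴA). -/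
/-!
Stack the sources and the noise into one random vector `X = (z₁, …, z_N, w)`. The error
`ẑ − Σₙ zₙ` is then `C X` for the block row `C = [M₁ ⋯ M_N  Aᴴ]` with `Mₙ = AᴴHₙBₙ − I`, and for
any square-integrable random vector `E‖C X‖² = Re tr(C E[X Xᴴ] Cᴴ)`. Here `E[X Xᴴ] = diag(I, σ² I)`:
the source block is the identity by the covariance assumptions, and the source–noise blocks vanish
because the sources are centred and independent of the noise. Expanding
`C diag(I, σ² I) Cᴴ = Σₙ Mₙ Mₙᴴ + σ² AᴴA` gives the formula.
-/

open Matrix MeasureTheory ProbabilityTheory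

section Moments

variable {𝕜 Ω ι κ m : Type*} [RCLike 𝕜] [MeasurableSpace Ω] {μ : Measure Ω}

noncomputable def crossMoment (μ : Measure Ω) (X : Ω → ι → 𝕜) (Y : Ω → κ → 𝕜) :
    Matrix ι κ 𝕜 :=
  of fun i j => ∫ ω, X ω i * star (Y ω j) ∂μ

theorem conjTranspose_crossMoment (X : Ω → ι → 𝕜) (Y : Ω → κ → 𝕜) :
    (crossMoment μ X Y)ᴴ = crossMoment μ Y X := by
  ext i j
  simp only [crossMoment, conjTranspose_apply, of_apply, RCLike.star_def, ← integral_conj,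
    map_mul, RCLike.conj_conj, mul_comm]

theorem crossMoment_sumElim {ι' : Type*} (X : Ω → ι → 𝕜) (Y : Ω → ι' → 𝕜) :
    crossMoment μ (fun ω => Sum.elim (X ω) (Y ω)) (fun ω => Sum.elim (X ω) (Y ω)) =
      fromBlocks (crossMoment μ X X) (crossMoment μ X Y) (crossMoment μ Y X)
        (crossMoment μ Y Y) := by
  ext (i | i) (j | j) <;> rfl

theorem crossMoment_eq_zero_of_indepFun [Countable ι] [Countable κ]
    {X : Ω → ι → 𝕜} {Y : Ω → κ → 𝕜} (hXY : IndepFun X Y μ)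
    (hX : ∀ i, AEStronglyMeasurable (fun ω => X ω i) μ)
    (hY : ∀ j, AEStronglyMeasurable (fun ω => Y ω j) μ) (hX0 : ∀ i, ∫ ω, X ω i ∂μ = 0) :
    crossMoment μ X Y = 0 := by
  ext i j
  have hind : IndepFun (fun ω => X ω i) (fun ω => star (Y ω j)) μ :=
    hXY.comp (measurable_pi_apply i) (continuous_star.measurable.comp (measurable_pi_apply j))
  rw [crossMoment, of_apply, hind.integral_fun_mul_eq_mul_integral (hX i) (hY j).star, hX0,
    zero_mul, Matrix.zero_apply]

theorem crossMoment_uncurry_eq_one [DecidableEq ι] [DecidableEq κ] {z : ι → Ω → κ → 𝕜}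
    (hcov : ∀ n k l, ∫ ω, z n ω k * star (z n ω l) ∂μ = if k = l then 1 else 0)
    (huncorr : ∀ n m, n ≠ m → ∀ k l, ∫ ω, z n ω k * star (z m ω l) ∂μ = 0) :
    crossMoment μ (fun ω (p : ι × κ) => z p.1 ω p.2) (fun ω (p : ι × κ) => z p.1 ω p.2) = 1 := by
  ext ⟨n, k⟩ ⟨m, l⟩
  by_cases h : n = m
  · subst h
    simpa [crossMoment, one_apply] using hcov n k l
  · simpa [crossMoment, one_apply, h] using huncorr n m h k l

theorem integrable_trace_mul [Fintype ι] (D : Matrix ι ι 𝕜) {V : Ω → Matrix ι ι 𝕜}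
    (hV : ∀ i j, Integrable (fun ω => V ω i j) μ) :
    Integrable (fun ω => (D * V ω).trace) μ := by
  simp only [trace, diag_apply, mul_apply]
  exact integrable_finsetSum _ fun i _ => integrable_finsetSum _ fun j _ => (hV j i).const_mul _

theorem integral_trace_mul [Fintype ι] (D : Matrix ι ι 𝕜) {V : Ω → Matrix ι ι 𝕜}
    (hV : ∀ i j, Integrable (fun ω => V ω i j) μ) :
    ∫ ω, (D * V ω).trace ∂μ = (D * of fun i j => ∫ ω, V ω i j ∂μ).trace := by
  simp only [trace, diag_apply, mul_apply, of_apply]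
  have hterm : ∀ i j, Integrable (fun ω => D i j * V ω j i) μ := fun i j => (hV j i).const_mul _
  rw [integral_finsetSum _ fun i _ => integrable_finsetSum _ fun j _ => hterm i j]
  refine Finset.sum_congr rfl fun i _ => ?_
  rw [integral_finsetSum _ fun j _ => hterm i j]
  simp only [integral_const_mul]

theorem sum_norm_sq_mulVec [Fintype ι] [Fintype m] (C : Matrix m ι 𝕜) (x : ι → 𝕜) :
    ∑ k, ‖(C *ᵥ x) k‖ ^ 2 = RCLike.re (C * vecMulVec x (star x) * Cᴴ).trace := by
  rw [mul_vecMulVec, vecMulVec_mul, ← star_mulVec, trace_vecMulVec, dotProduct, map_sum]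
  refine Finset.sum_congr rfl fun k _ => ?_
  rw [Pi.star_apply, RCLike.star_def, RCLike.mul_conj, ← RCLike.ofReal_pow, RCLike.ofReal_re]

theorem integral_sum_norm_sq_mulVec [Fintype ι] [Fintype m] (C : Matrix m ι 𝕜)
    {X : Ω → ι → 𝕜} (hX : ∀ i, MemLp (fun ω => X ω i) 2 μ) :
    ∫ ω, ∑ k, ‖(C *ᵥ X ω) k‖ ^ 2 ∂μ = RCLike.re (C * crossMoment μ X X * Cᴴ).trace := by
  have hV : ∀ i j, Integrable (fun ω => vecMulVec (X ω) (star (X ω)) i j) μ := fun i j =>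
    (hX i).integrable_mul (hX j).star
  simp_rw [sum_norm_sq_mulVec, trace_mul_cycle C]
  rw [integral_re (integrable_trace_mul _ hV), integral_trace_mul _ hV]
  rfl

end Moments

namespace Matrix

variable {R m n ι : Type*}

def fromColBlocks (M : ι → Matrix m n R) : Matrix m (ι × n) R :=
  of fun k p => M p.1 k p.2

theorem fromColBlocks_mulVec [Fintype ι] [Fintype n] [NonUnitalNonAssocSemiring R]
    (M : ι → Matrix m n R) (v : ι → n → R) :
    fromColBlocks M *ᵥ (fun p => v p.1 p.2) = ∑ i, M i *ᵥ v i := by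
  ext k
  simp only [mulVec, dotProduct, fromColBlocks, of_apply, Fintype.sum_prod_type,
    Finset.sum_apply]

theorem fromColBlocks_mul_conjTranspose [Fintype ι] [Fintype n] [NonUnitalSemiring R]
    [StarRing R] (M M' : ι → Matrix m n R) :
    fromColBlocks M * (fromColBlocks M')ᴴ = ∑ i, M i * (M' i)ᴴ := by
  ext k k'
  simp only [mul_apply, conjTranspose_apply, fromColBlocks, of_apply, Fintype.sum_prod_type,
    Matrix.sum_apply]

theorem fromCols_mul_fromBlocks_one_smul_one_mul_conjTranspose [Fintype n] [Fintype ι]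
    [DecidableEq n] [DecidableEq ι] [CommSemiring R] [StarRing R] (P : Matrix m n R)
    (Q : Matrix m ι R) (s : R) :
    fromCols P Q * (fromBlocks 1 0 0 (s • 1) : Matrix (n ⊕ ι) (n ⊕ ι) R) * (fromCols P Q)ᴴ =
      P * Pᴴ + s • (Q * Qᴴ) := by
  rw [conjTranspose_fromCols_eq_fromRows_conjTranspose, fromCols_mul_fromBlocks,
    fromCols_mul_fromRows]
  simp only [Matrix.mul_one, Matrix.mul_zero, add_zero, zero_add, Matrix.mul_smul,
    Matrix.smul_mul]

end Matrix

theorem aircomp_mse_multi_antenna_general (Nr Nt L N : ℕ) {Ω : Type*} [MeasurableSpace Ω]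
    (μ : Measure Ω)
    (A : Matrix (Fin Nr) (Fin L) ℂ) (H : Fin N → Matrix (Fin Nr) (Fin Nt) ℂ)
    (B : Fin N → Matrix (Fin Nt) (Fin L) ℂ) (σ : ℝ)
    (z : Fin N → Ω → Fin L → ℂ) (w : Ω → Fin Nr → ℂ)
    (hzL2 : ∀ n k, MemLp (fun ω => z n ω k) 2 μ)
    (hwL2 : ∀ i, MemLp (fun ω => w ω i) 2 μ)
    (hzmean : ∀ n k, ∫ ω, z n ω k ∂μ = 0)
    (hzcov : ∀ n k l, ∫ ω, z n ω k * star (z n ω l) ∂μ = if k = l then 1 else 0)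
    (hzuncorr : ∀ n m, n ≠ m → ∀ k l, ∫ ω, z n ω k * star (z m ω l) ∂μ = 0)
    (hwcov : ∀ i j, ∫ ω, w ω i * star (w ω j) ∂μ = if i = j then (σ ^ 2 : ℂ) else 0)
    (hindep : IndepFun (fun ω => fun p : Fin N × Fin L => z p.1 ω p.2) w μ)
    (zhat : Ω → Fin L → ℂ)
    (hzhat : zhat = fun ω => Aᴴ *ᵥ ((∑ n, (H n * B n) *ᵥ z n ω) + w ω)) :
    ∫ ω, ∑ k, ‖zhat ω k - ∑ n, z n ω k‖ ^ 2 ∂μ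
      = (∑ n, ((Aᴴ * H n * B n - 1) * (Aᴴ * H n * B n - 1)ᴴ).trace.re)
          + σ ^ 2 * (Aᴴ * A).trace.re := by
  set M := fun n => Aᴴ * H n * B n - 1
  set Z : Ω → Fin N × Fin L → ℂ := fun ω p => z p.1 ω p.2
  set X : Ω → Fin N × Fin L ⊕ Fin Nr → ℂ := fun ω => Sum.elim (Z ω) (w ω)
  set C := fromCols (fromColBlocks M) Aᴴ
  have herr : ∀ ω, zhat ω - ∑ n, z n ω = C *ᵥ X ω := by
    intro ω
    rw [fromCols_mulVec_sumElim,
      show fromColBlocks M *ᵥ Z ω = _ from fromColBlocks_mulVec M fun n => z n ω, hzhat]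
    simp only [M, mulVec_add, mulVec_sum, mulVec_mulVec, sub_mulVec, one_mulVec,
      Finset.sum_sub_distrib, Matrix.mul_assoc]
    abel
  have hL2 : ∀ i, MemLp (fun ω => X ω i) 2 μ := by
    rintro (p | i)
    exacts [hzL2 p.1 p.2, hwL2 i]
  have hZw : crossMoment μ Z w = 0 :=
    crossMoment_eq_zero_of_indepFun hindep (fun p => (hzL2 p.1 p.2).1) (fun i => (hwL2 i).1)
      fun p => hzmean p.1 p.2
  have hww : crossMoment μ w w = (σ ^ 2 : ℂ) • 1 := by
    ext i j
    simpa [crossMoment, one_apply] using hwcov i j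
  calc ∫ ω, ∑ k, ‖zhat ω k - ∑ n, z n ω k‖ ^ 2 ∂μ
      = ∫ ω, ∑ k, ‖(C *ᵥ X ω) k‖ ^ 2 ∂μ := by
        simp only [← herr, Pi.sub_apply, Finset.sum_apply]
    _ = (C * crossMoment μ X X * Cᴴ).trace.re := integral_sum_norm_sq_mulVec C hL2
    _ = _ := by
      rw [crossMoment_sumElim, crossMoment_uncurry_eq_one hzcov hzuncorr, hZw,
        ← conjTranspose_crossMoment, hZw, conjTranspose_zero, hww,
        fromCols_mul_fromBlocks_one_smul_one_mul_conjTranspose, fromColBlocks_mul_conjTranspose,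
        conjTranspose_conjTranspose, trace_add, trace_sum, trace_smul, Complex.add_re,
        Complex.re_sum, smul_eq_mul, ← Complex.ofReal_pow, Complex.re_ofReal_mul]

/-- Multi-antenna AirComp MSE: with `ẑ = Aᴴ Σ_n H_n B_n z_n + Aᴴ w`, where the `z_n ∈ ℂ^L`
are zero-mean, have identity covariance, are mutually uncorrelated, and `w` is zero-mean
noise with covariance `σ²I` independent of the `z_n`, one has
`E[(ẑ − Σ_n z_n)ᴴ(ẑ − Σ_n z_n)] = Σ_n tr((AᴴH_nB_n − I)(AᴴH_nB_n − I)ᴴ) + σ² tr(AᴴA)`. -/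
theorem aircomp_mse_multi_antenna (Nr Nt L N : ℕ) {Ω : Type*} [MeasurableSpace Ω]
    (μ : Measure Ω) [IsProbabilityMeasure μ]
    (A : Matrix (Fin Nr) (Fin L) ℂ) (H : Fin N → Matrix (Fin Nr) (Fin Nt) ℂ)
    (B : Fin N → Matrix (Fin Nt) (Fin L) ℂ) (σ : ℝ)
    (z : Fin N → Ω → Fin L → ℂ) (w : Ω → Fin Nr → ℂ)
    (hzL2 : ∀ n k, MemLp (fun ω => z n ω k) 2 μ)
    (hwL2 : ∀ i, MemLp (fun ω => w ω i) 2 μ)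
    (hzmean : ∀ n k, ∫ ω, z n ω k ∂μ = 0)
    (hzcov : ∀ n k l, ∫ ω, z n ω k * star (z n ω l) ∂μ = if k = l then 1 else 0)
    (hzuncorr : ∀ n m, n ≠ m → ∀ k l, ∫ ω, z n ω k * star (z m ω l) ∂μ = 0)
    (hwmean : ∀ i, ∫ ω, w ω i ∂μ = 0)
    (hwcov : ∀ i j, ∫ ω, w ω i * star (w ω j) ∂μ = if i = j then (σ ^ 2 : ℂ) else 0)
    (hindep : IndepFun (fun ω => fun p : Fin N × Fin L => z p.1 ω p.2) w μ)
    (zhat : Ω → Fin L → ℂ)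
    (hzhat : zhat = fun ω => Aᴴ *ᵥ ((∑ n, (H n * B n) *ᵥ z n ω) + w ω)) :
    ∫ ω, ∑ k, ‖zhat ω k - ∑ n, z n ω k‖ ^ 2 ∂μ
      = (∑ n, ((Aᴴ * H n * B n - 1) * (Aᴴ * H n * B n - 1)ᴴ).trace.re)
          + σ ^ 2 * (Aᴴ * A).trace.re :=
  aircomp_mse_multi_antenna_general Nr Nt L N μ A H B σ z w hzL2 hwL2 hzmean hzcov hzuncorr hwcov
    hindep zhat hzhat
end

section
/- Let ρ^τ ∈ (0,1] be a sequence with Σ_τ ρ^τ τ^{-1/2} < ∞, and let e^τ be a sequence in ℝ^d with ‖e^τ‖ ≤ C/√τ for all τ ≥ 1. Define u^τ = (1−ρ^τ)u^{τ−1} + ρ^τ (v + e^τ) with u^{−1} = 0 and fixed v ∈ ℝ^d, where additionally Σ_τ ρ^τ = ∞ and lim ρ^τ = 0. Then u^τ → v as τ → ∞. -/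
/-! The error `a τ = ‖u τ - v‖` obeys `a (τ+1) ≤ (1 - ρ (τ+1)) a τ + ρ (τ+1) ‖e (τ+1)‖`, and the
perturbations `ρ τ ‖e τ‖ ≤ C ρ τ / √τ` are summable. Unrolled from a time `m`, the recursion damps
`a m` by `∏ (1 - ρ k) ≤ exp (-∑ ρ k) → 0`, while the accumulated perturbations stay below the
tail of a convergent series beyond `m`. -/

open Filter Finset

theorem prod_one_sub_le_exp_neg_sum {ι : Type*} (s : Finset ι) {x : ι → ℝ}
    (hx : ∀ i ∈ s, x i ≤ 1) : ∏ i ∈ s, (1 - x i) ≤ Real.exp (-∑ i ∈ s, x i) := by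
  rw [← sum_neg_distrib, Real.exp_sum]
  exact prod_le_prod (fun i hi => sub_nonneg.2 (hx i hi))
    fun i _ => by linarith [Real.add_one_le_exp (-x i)]

theorem tendsto_prod_Ico_one_sub_of_not_summable {x : ℕ → ℝ} (hx : ∀ n, x n ∈ Set.Icc 0 1)
    (hdiv : ¬ Summable x) (m : ℕ) :
    Tendsto (fun N => ∏ k ∈ Ico m N, (1 - x k)) atTop (nhds 0) := by
  have hsum : Tendsto (fun N => ∑ k ∈ Ico m N, x k) atTop atTop := by
    have hpartial := (not_summable_iff_tendsto_nat_atTop_of_nonneg fun n => (hx n).1).1 hdiv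
    refine (tendsto_atTop_add_const_right _ (-∑ k ∈ range m, x k) hpartial).congr' ?_
    filter_upwards [eventually_ge_atTop m] with N hN
    rw [sum_Ico_eq_sub _ hN, sub_eq_add_neg]
  refine squeeze_zero (fun N => prod_nonneg fun k _ => sub_nonneg.2 (hx k).2)
    (fun N => prod_one_sub_le_exp_neg_sum _ fun k _ => (hx k).2) ?_
  exact Real.tendsto_exp_atBot.comp (tendsto_neg_atTop_atBot.comp hsum)

section OneSubMulAddRecursion

variable {a x ε : ℕ → ℝ}

theorem le_prod_Ico_mul_add_sum_Ico_of_le_one_sub_mul_add (hx : ∀ n, x n ∈ Set.Icc 0 1)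
    (hrec : ∀ n, a (n + 1) ≤ (1 - x n) * a n + ε n) (hε : ∀ n, 0 ≤ ε n) {m N : ℕ}
    (hmN : m ≤ N) : a N ≤ (∏ k ∈ Ico m N, (1 - x k)) * a m + ∑ k ∈ Ico m N, ε k := by
  induction N, hmN using Nat.le_induction with
  | base => simp
  | succ N hmN ih =>
    rw [prod_Ico_succ_top hmN, sum_Ico_succ_top hmN]
    calc a (N + 1) ≤ (1 - x N) * a N + ε N := hrec N
      _ ≤ (1 - x N) * ((∏ k ∈ Ico m N, (1 - x k)) * a m + ∑ k ∈ Ico m N, ε k) + ε N := by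
          gcongr
          exact sub_nonneg.2 (hx N).2
      _ ≤ _ := by
          have hdamp : (1 - x N) * ∑ k ∈ Ico m N, ε k ≤ ∑ k ∈ Ico m N, ε k :=
            mul_le_of_le_one_left (sum_nonneg fun k _ => hε k) (by linarith [(hx N).1])
          linarith

theorem tendsto_zero_of_le_one_sub_mul_add (hx : ∀ n, x n ∈ Set.Icc 0 1)
    (hrec : ∀ n, a (n + 1) ≤ (1 - x n) * a n + ε n) (ha : ∀ n, 0 ≤ a n) (hdiv : ¬ Summable x)
    (hε : Summable ε) (hε0 : ∀ n, 0 ≤ ε n) : Tendsto a atTop (nhds 0) := by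
  refine tendsto_order.2 ⟨fun b hb => .of_forall fun n => hb.trans_le (ha n), fun δ hδ => ?_⟩
  have htail : Tendsto (fun m => ∑' k, ε k - ∑ k ∈ range m, ε k) atTop (nhds 0) := by
    simpa using hε.tendsto_sum_tsum_nat.const_sub (∑' k, ε k)
  obtain ⟨m, hm⟩ := ((tendsto_order.1 htail).2 (δ / 2) (half_pos hδ)).exists
  have hprod := (tendsto_prod_Ico_one_sub_of_not_summable hx hdiv m).mul_const (a m)
  rw [zero_mul] at hprod
  filter_upwards [(tendsto_order.1 hprod).2 (δ / 2) (half_pos hδ), eventually_ge_atTop m]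
    with N hN hmN
  have htailN : ∑ k ∈ Ico m N, ε k ≤ ∑' k, ε k - ∑ k ∈ range m, ε k := by
    rw [sum_Ico_eq_sub _ hmN]
    exact sub_le_sub_right (hε.sum_le_tsum _ fun k _ => hε0 k) _
  calc a N ≤ (∏ k ∈ Ico m N, (1 - x k)) * a m + ∑ k ∈ Ico m N, ε k :=
        le_prod_Ico_mul_add_sum_Ico_of_le_one_sub_mul_add hx hrec hε0 hmN
    _ < δ / 2 + δ / 2 := add_lt_add_of_lt_of_le hN (htailN.trans hm.le)
    _ = δ := add_halves δ

end OneSubMulAddRecursion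

section Averaging

variable {E : Type*} [NormedAddCommGroup E] [NormedSpace ℝ E]

theorem norm_convex_update_sub_le {r : ℝ} (hr : r ∈ Set.Icc 0 1) (u v e : E) :
    ‖(1 - r) • u + r • (v + e) - v‖ ≤ (1 - r) * ‖u - v‖ + r * ‖e‖ := by
  have hsplit : (1 - r) • u + r • (v + e) - v = (1 - r) • (u - v) + r • e := by module
  rw [hsplit]
  refine (norm_add_le _ _).trans_eq ?_
  rw [norm_smul, norm_smul, Real.norm_of_nonneg (sub_nonneg.2 hr.2), Real.norm_of_nonneg hr.1]

theorem tendsto_of_convex_update {r : ℕ → ℝ} (hr : ∀ n, r n ∈ Set.Icc 0 1)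
    (hdiv : ¬ Summable r) {u e : ℕ → E} {v : E} (he : Summable fun n => r n * ‖e n‖)
    (hu : ∀ n, u (n + 1) = (1 - r n) • u n + r n • (v + e n)) :
    Tendsto u atTop (nhds v) := by
  rw [tendsto_iff_norm_sub_tendsto_zero]
  refine tendsto_zero_of_le_one_sub_mul_add hr (fun n => ?_) (fun n => norm_nonneg _) hdiv he
    fun n => mul_nonneg (hr n).1 (norm_nonneg _)
  rw [hu]
  exact norm_convex_update_sub_le (hr n) _ _ _

end Averaging

theorem recursive_tracking_converges_general (d : ℕ) (ρ : ℕ → ℝ)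
    (hρ : ∀ τ, ρ τ ∈ Set.Ioc (0 : ℝ) 1)
    (hρdiv : ¬ Summable ρ)
    (hρsqrt : Summable fun τ => ρ τ / Real.sqrt τ)
    (C : ℝ) (v : EuclideanSpace ℝ (Fin d)) (e : ℕ → EuclideanSpace ℝ (Fin d))
    (he : ∀ τ : ℕ, 1 ≤ τ → ‖e τ‖ ≤ C / Real.sqrt τ)
    (u : ℕ → EuclideanSpace ℝ (Fin d))
    (hurec : ∀ τ : ℕ, u (τ + 1) = (1 - ρ (τ + 1)) • u τ + ρ (τ + 1) • (v + e (τ + 1))) :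
    Tendsto u atTop (nhds v) := by
  have hρ' : ∀ τ, ρ (τ + 1) ∈ Set.Icc 0 1 := fun τ => Set.Ioc_subset_Icc_self (hρ (τ + 1))
  have hbias : Summable fun τ => ρ (τ + 1) * ‖e (τ + 1)‖ := by
    refine .of_nonneg_of_le (fun τ => mul_nonneg (hρ' τ).1 (norm_nonneg _)) (fun τ => ?_)
      (((summable_nat_add_iff 1).2 hρsqrt).mul_left C)
    calc ρ (τ + 1) * ‖e (τ + 1)‖ ≤ ρ (τ + 1) * (C / Real.sqrt ↑(τ + 1)) :=
          mul_le_mul_of_nonneg_left (he (τ + 1) (Nat.le_add_left 1 τ)) (hρ' τ).1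
      _ = C * (ρ (τ + 1) / Real.sqrt ↑(τ + 1)) := by ring
  exact tendsto_of_convex_update hρ' (mt (summable_nat_add_iff 1).1 hρdiv) hbias hurec

/-- Deterministic recursive-averaging convergence: if `ρ^τ ∈ (0,1]`, `ρ^τ → 0`,
`Σ ρ^τ = ∞`, `Σ ρ^τ τ^{-1/2} < ∞`, the bias satisfies `‖e^τ‖ ≤ C/√τ` for `τ ≥ 1`, and
`u^τ = (1−ρ^τ)u^{τ−1} + ρ^τ(v + e^τ)` with `u^{−1} = 0`, then `u^τ → v`. -/
theorem recursive_tracking_converges (d : ℕ) (ρ : ℕ → ℝ)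
    (hρ : ∀ τ, ρ τ ∈ Set.Ioc (0 : ℝ) 1)
    (hρ0 : Tendsto ρ atTop (nhds 0))
    (hρdiv : ¬ Summable ρ)
    (hρsqrt : Summable fun τ => ρ τ / Real.sqrt τ)
    (C : ℝ) (v : EuclideanSpace ℝ (Fin d)) (e : ℕ → EuclideanSpace ℝ (Fin d))
    (he : ∀ τ : ℕ, 1 ≤ τ → ‖e τ‖ ≤ C / Real.sqrt τ)
    (u : ℕ → EuclideanSpace ℝ (Fin d))
    (hu0 : u 0 = ρ 0 • (v + e 0))
    (hurec : ∀ τ : ℕ, u (τ + 1) = (1 - ρ (τ + 1)) • u τ + ρ (τ + 1) • (v + e (τ + 1))) :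
    Tendsto u atTop (nhds v) :=
  recursive_tracking_converges_general d ρ hρ hρdiv hρsqrt C v e he u hurec
end
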